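/- Let n ≥ 1 and let 2m > 0 be an even integer. Define the 𝔬_E-lattices M_{2m} = (⊕_{i≠0} 𝔬_E e_i) ⊕ 𝔭_E^m e_0 and M_{2m}^* = (⊕_{i≠0} 𝔬_E e_i) ⊕ 𝔭_E^{−m} e_0 in V, and N_{2m} = (⊕_{i≠−n} 𝔬_E f_i) ⊕ 𝔭_E^m f_{−n} and N_{2m}^* = 𝔭_E^{−m} f_n ⊕ (⊕_{i≠n} 𝔬_E f_i) in W. Then K_{2m}^V = {h ∈ U(V) : (h−1)·M_{2m}^* ⊆ M_{2m}} and K_{2m}^W = {g ∈ U(W) : (g−1)·N_{2m}^* ⊆ N_{2m}}. -/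

import Mathlib

open Matrix MeasureTheory
open scoped Classical

noncomputable section

namespace Newforms

variable {E : Type} [Field E]

/-- The subset `𝔭_E^m ⊆ E` for `m : ℤ`, where `𝔭_E = ϖ 𝔬_E`. -/
def Ppow (O : Subring E) (ϖ : E) (m : ℤ) : Set E :=
  {x : E | ∃ y ∈ O, x = ϖ ^ m * y}

/-- `w_k`: the antidiagonal `k × k` matrix with all antidiagonal entries `1`. -/
def wMat (E : Type) [Field E] (k : ℕ) : Matrix (Fin k) (Fin k) E :=
  fun i j => if (i : ℕ) + (j : ℕ) + 1 = k then 1 else 0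

/-- `J_{2n} = [[0, wₙ],[−wₙ,0]]`. -/
def Jmat (E : Type) [Field E] (n : ℕ) : Matrix (Fin (2 * n)) (Fin (2 * n)) E :=
  fun i j => if (i : ℕ) + (j : ℕ) + 1 = 2 * n then (if (i : ℕ) < n then (1 : E) else -1) else 0

/-- The quasi-split even unitary group `U_{2n}`, as a set of matrices:
`ᵗḡ J_{2n} g = J_{2n}`. -/
def USet (σ : E ≃+* E) (n : ℕ) : Set (Matrix (Fin (2 * n)) (Fin (2 * n)) E) :=
  {g | (g.map σ)ᵀ * Jmat E n * g = Jmat E n}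

/-- The quasi-split odd unitary group `U_{2n+1}`: `ᵗh̄ w_{2n+1} h = w_{2n+1}`. -/
def UOddSet (σ : E ≃+* E) (n : ℕ) : Set (Matrix (Fin (2 * n + 1)) (Fin (2 * n + 1)) E) :=
  {h | (h.map σ)ᵀ * wMat E (2 * n + 1) * h = wMat E (2 * n + 1)}

/-- The congruence (shape) conditions defining `K_{2m}^W` inside `U_{2n}`. -/
def KWshape (O : Subring E) (ϖ : E) (n m : ℕ) :
    Set (Matrix (Fin (2 * n)) (Fin (2 * n)) E) :=
  {g | (∀ i j, g i j ∈ O) ∧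
    ∀ i j : Fin (2 * n),
      ((i : ℕ) = 0 ∧ (j : ℕ) = 0 → g i j - 1 ∈ Ppow O ϖ m) ∧
      (0 < (i : ℕ) ∧ (i : ℕ) < 2 * n - 1 ∧ (j : ℕ) = 0 → g i j ∈ Ppow O ϖ m) ∧
      ((i : ℕ) = 2 * n - 1 ∧ (j : ℕ) = 0 → g i j ∈ Ppow O ϖ (2 * m)) ∧
      ((i : ℕ) = 2 * n - 1 ∧ 0 < (j : ℕ) ∧ (j : ℕ) < 2 * n - 1 → g i j ∈ Ppow O ϖ m) ∧
      ((i : ℕ) = 2 * n - 1 ∧ (j : ℕ) = 2 * n - 1 → g i j - 1 ∈ Ppow O ϖ m)}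

/-- The compact open subgroup `K_{2m}^W ⊆ U_{2n}`. -/
def KW (σ : E ≃+* E) (O : Subring E) (ϖ : E) (n m : ℕ) :
    Set (Matrix (Fin (2 * n)) (Fin (2 * n)) E) :=
  KWshape O ϖ n m ∩ USet σ n

/-- The congruence (shape) conditions defining `K_{2m}^V` inside `U_{2n+1}`. -/
def KVshape (O : Subring E) (ϖ : E) (n m : ℕ) :
    Set (Matrix (Fin (2 * n + 1)) (Fin (2 * n + 1)) E) :=
  {h | (∀ i j, h i j ∈ O) ∧
    (∀ i j : Fin (2 * n + 1),
      (((i : ℕ) = n ∧ (j : ℕ) ≠ n) ∨ ((i : ℕ) ≠ n ∧ (j : ℕ) = n) → h i j ∈ Ppow O ϖ m)) ∧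
    (∀ i j : Fin (2 * n + 1), (i : ℕ) = n ∧ (j : ℕ) = n → h i j - 1 ∈ Ppow O ϖ (2 * m))}

/-- The compact open subgroup `K_{2m}^V ⊆ U_{2n+1}`. -/
def KV (σ : E ≃+* E) (O : Subring E) (ϖ : E) (n m : ℕ) :
    Set (Matrix (Fin (2 * n + 1)) (Fin (2 * n + 1)) E) :=
  KVshape O ϖ n m ∩ UOddSet σ n

/-- The shape conditions for `J_{2m}^V` (central entry in `1 + 𝔭_E^m`). -/
def JVshape (O : Subring E) (ϖ : E) (n m : ℕ) :
    Set (Matrix (Fin (2 * n + 1)) (Fin (2 * n + 1)) E) :=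
  {h | (∀ i j, h i j ∈ O) ∧
    (∀ i j : Fin (2 * n + 1),
      (((i : ℕ) = n ∧ (j : ℕ) ≠ n) ∨ ((i : ℕ) ≠ n ∧ (j : ℕ) = n) → h i j ∈ Ppow O ϖ m)) ∧
    (∀ i j : Fin (2 * n + 1), (i : ℕ) = n ∧ (j : ℕ) = n → h i j - 1 ∈ Ppow O ϖ m)}

/-- `x w_k ᵗȳ = Σᵢ xᵢ σ(y_{k-1-i})` for row vectors `x, y ∈ E^k`. -/
def pairW (σ : E ≃+* E) {k : ℕ} (x y : Fin k → E) : E :=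
  ∑ i, x i * σ (y i.rev)

/-- `ψ_E(x) = ψ((x + x̄)/2)`. -/
def psiE (σ : E ≃+* E) (ψ : E → ℂ) (x : E) : ℂ := ψ ((x + σ x) / 2)

def idx0 (k : ℕ) : Fin (2 * (k + 1)) := ⟨0, by omega⟩
def idxLast (k : ℕ) : Fin (2 * (k + 1)) := ⟨2 * k + 1, by omega⟩
def bX {k : ℕ} (i : Fin k) : Fin (2 * (k + 1)) := ⟨(i : ℕ) + 1, by have := i.isLt; omega⟩
def bY {k : ℕ} (i : Fin k) : Fin (2 * (k + 1)) := ⟨(i : ℕ) + (k + 1), by have := i.isLt; omega⟩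
def midIdx {k : ℕ} (i : Fin (2 * k)) : Fin (2 * (k + 1)) :=
  ⟨(i : ℕ) + 1, by have := i.isLt; omega⟩

/-- The Heisenberg element `𝐯(x,y;z) ∈ U_{2n}` (here `n = k+1` and `x, y ∈ E^{n-1} = E^k`). -/
def vMat (σ : E ≃+* E) (k : ℕ) (x y : Fin k → E) (z : E) :
    Matrix (Fin (2 * (k + 1))) (Fin (2 * (k + 1))) E :=
  1 + (∑ i, Matrix.single (idx0 k) (bX i) (x i))
    + (∑ i, Matrix.single (idx0 k) (bY i) (y i))
    + (∑ i, Matrix.single (bX i) (idxLast k) (σ (y i.rev)))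
    + (∑ i, Matrix.single (bY i) (idxLast k) (-σ (x i.rev)))
    + Matrix.single (idx0 k) (idxLast k) (z + (pairW σ x y - pairW σ y x) / 2)

/-- The Heisenberg group `H_{n-1} = {𝐯(x,y;z) | x, y ∈ E^{n-1}, z ∈ F}` (with `n = k+1`). -/
def Hset (σ : E ≃+* E) (k : ℕ) : Set (Matrix (Fin (2 * (k + 1))) (Fin (2 * (k + 1))) E) :=
  {g | ∃ x y : Fin k → E, ∃ z : E, σ z = z ∧ g = vMat σ k x y z}

/-- The embedding `U_{2n-2} → U_{2n}, g' ↦ diag(1, g', 1)` (here `n = k+1`). -/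
def iotaU (k : ℕ) (g : Matrix (Fin (2 * k)) (Fin (2 * k)) E) :
    Matrix (Fin (2 * (k + 1))) (Fin (2 * (k + 1))) E :=
  Matrix.single (idx0 k) (idx0 k) 1
    + Matrix.single (idxLast k) (idxLast k) 1
    + ∑ i, ∑ j, Matrix.single (midIdx i) (midIdx j) (g i j)

/-- `d_t = diag(t, 1_{2n-2}, t̄⁻¹)`. -/
def dtW (σ : E ≃+* E) (n : ℕ) (t : E) : Matrix (Fin (2 * n)) (Fin (2 * n)) E :=
  Matrix.diagonal fun i =>
    if (i : ℕ) = 0 then t else if (i : ℕ) = 2 * n - 1 then (σ t)⁻¹ else 1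

/-- `diag(ϖ^{-m}, 1_{2n-2}, ϖ^m)`. -/
def dWmat (ϖ : E) (n : ℕ) (m : ℤ) : Matrix (Fin (2 * n)) (Fin (2 * n)) E :=
  Matrix.diagonal fun i =>
    if (i : ℕ) = 0 then ϖ ^ (-m) else if (i : ℕ) = 2 * n - 1 then ϖ ^ m else 1

/-- `diag(ϖ^{-m}·1_n, 1, ϖ^m·1_n)`. -/
def dVmat (ϖ : E) (n : ℕ) (m : ℤ) : Matrix (Fin (2 * n + 1)) (Fin (2 * n + 1)) E :=
  Matrix.diagonal fun i =>
    if (i : ℕ) < n then ϖ ^ (-m) else if (i : ℕ) = n then 1 else ϖ ^ m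

/-- The span of `{π(𝐯(0,0;z)) v − χ(z) v}`: the kernel of `π ↠ π_χ`. -/
def FJkernel (σ : E ≃+* E) (k : ℕ) {V : Type} [AddCommGroup V] [Module ℂ V]
    (π : Matrix (Fin (2 * (k + 1))) (Fin (2 * (k + 1))) E → (V →ₗ[ℂ] V)) (χ : E → ℂ) :
    Submodule ℂ V :=
  Submodule.span ℂ {w | ∃ z : E, σ z = z ∧ ∃ v : V, w = π (vMat σ k 0 0 z) v - χ z • v}

/-- The submodule `π^K` of `K`-fixed vectors. -/
def fixedSub {V : Type} [AddCommGroup V] [Module ℂ V] {α : Type}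
    (π : α → (V →ₗ[ℂ] V)) (K : Set α) : Submodule ℂ V where
  carrier := {v | ∀ g ∈ K, π g v = v}
  add_mem' := by
    intro a b ha hb g hg
    rw [map_add, ha g hg, hb g hg]
  zero_mem' := by
    intro g hg
    exact map_zero _
  smul_mem' := by
    intro c v hv g hg
    rw [_root_.map_smul, hv g hg]

/-- The skew-hermitian form on `W = E^{2n}` in the basis `f_n, …, f_1, f_{-1}, …, f_{-n}`. -/
def formW (σ : E ≃+* E) (n : ℕ) (u v : Fin (2 * n) → E) : E :=
  ∑ i : Fin (2 * n), σ (u i) * v i.rev * (if (i : ℕ) < n then 1 else -1)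

/-- The lattice `(⊕_{i≠0} 𝔬_E e_i) ⊕ 𝔭_E^m e_0` in `V = E^{2n+1}` (coordinate `n` is `e_0`). -/
def MVlat (O : Subring E) (ϖ : E) (n : ℕ) (m : ℤ) : Set (Fin (2 * n + 1) → E) :=
  {u | (∀ i : Fin (2 * n + 1), (i : ℕ) ≠ n → u i ∈ O) ∧
       ∀ i : Fin (2 * n + 1), (i : ℕ) = n → u i ∈ Ppow O ϖ m}

/-- The lattice `(⊕_{i≠-n} 𝔬_E f_i) ⊕ 𝔭_E^m f_{-n}` in `W = E^{2n}`
(coordinate `2n-1` is `f_{-n}`). -/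
def NWlat (O : Subring E) (ϖ : E) (n : ℕ) (m : ℤ) : Set (Fin (2 * n) → E) :=
  {u | (∀ i : Fin (2 * n), (i : ℕ) ≠ 2 * n - 1 → u i ∈ O) ∧
       ∀ i : Fin (2 * n), (i : ℕ) = 2 * n - 1 → u i ∈ Ppow O ϖ m}

/-- The lattice `𝔭_E^m f_n ⊕ (⊕_{i≠n} 𝔬_E f_i)` in `W = E^{2n}` (coordinate `0` is `f_n`). -/
def NWdual (O : Subring E) (ϖ : E) (n : ℕ) (m : ℤ) : Set (Fin (2 * n) → E) :=
  {u | (∀ i : Fin (2 * n), (i : ℕ) ≠ 0 → u i ∈ O) ∧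
       ∀ i : Fin (2 * n), (i : ℕ) = 0 → u i ∈ Ppow O ϖ m}

/-- `𝕎 = V ⊗_E W` realized as `(2n+1) × 2n` matrices via the bases `(e_i)` and `(f_j)`;
this is `⟨T, T'⟩_V ⊗ ⟨,⟩_W`-pairing before taking the trace to `F`. -/
def formVW (σ : E ≃+* E) (n : ℕ) (T T' : Matrix (Fin (2 * n + 1)) (Fin (2 * n)) E) : E :=
  ∑ i, ∑ j, σ (T i j) * T' i.rev j.rev * (if (j : ℕ) < n then 1 else -1)

/-- The symplectic `F`-bilinear form `⟨v⊗w, v'⊗w'⟩ = tr_{E/F}(⟨v,v'⟩_V ⟨w,w'⟩_W)` on `𝕎`. -/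
def sympForm (σ : E ≃+* E) (n : ℕ) (T T' : Matrix (Fin (2 * n + 1)) (Fin (2 * n)) E) : E :=
  formVW σ n T T' + σ (formVW σ n T T')

/-- The self-dual lattice `A = Γ_V ⊗ Γ_W ⊆ 𝕎`. -/
def ASet (O : Subring E) (n : ℕ) : Set (Matrix (Fin (2 * n + 1)) (Fin (2 * n)) E) :=
  {T | ∀ i j, T i j ∈ O}

/-- The Weyl-type element `w_{1,n-1} ∈ U_{2n}` (here `n = k+1`). -/
def w1Mat (E : Type) [Field E] (k : ℕ) : Matrix (Fin (2 * (k + 1))) (Fin (2 * (k + 1))) E :=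
  (∑ i : Fin k, Matrix.single (⟨(i : ℕ), by have := i.isLt; omega⟩ : Fin (2 * (k + 1)))
      ⟨(i : ℕ) + 1, by have := i.isLt; omega⟩ 1)
  + Matrix.single (⟨k, by omega⟩ : Fin (2 * (k + 1))) ⟨0, by omega⟩ 1
  + Matrix.single (⟨k + 1, by omega⟩ : Fin (2 * (k + 1))) ⟨2 * k + 1, by omega⟩ 1
  + (∑ i : Fin k, Matrix.single
      (⟨k + 2 + (i : ℕ), by have := i.isLt; omega⟩ : Fin (2 * (k + 1)))
      ⟨k + 1 + (i : ℕ), by have := i.isLt; omega⟩ 1)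

/-- `𝐦(a) = diag(1, a, w_{n-1} ᵗā⁻¹ w_{n-1}⁻¹, 1) ∈ U_{2n}` (here `n = k+1`). -/
def mMatBig (σ : E ≃+* E) (k : ℕ) (a : Matrix (Fin k) (Fin k) E) :
    Matrix (Fin (2 * (k + 1))) (Fin (2 * (k + 1))) E :=
  Matrix.single (idx0 k) (idx0 k) 1
    + Matrix.single (idxLast k) (idxLast k) 1
    + (∑ i, ∑ j, Matrix.single (bX i) (bX j) (a i j))
    + (∑ i, ∑ j, Matrix.single (bY i) (bY j)
        ((wMat E k * ((a⁻¹).map σ)ᵀ * (wMat E k)⁻¹) i j))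

/-- The unipotent element `g_u` with `ᵗu` in block position `(1,2)` and `−ū w_{n-1}` in block
position `(3,4)` (block sizes `(n-1,1,1,n-1)`, `n = k+1`). -/
def gUMat (σ : E ≃+* E) (k : ℕ) (u : Fin k → E) :
    Matrix (Fin (2 * (k + 1))) (Fin (2 * (k + 1))) E :=
  1 + (∑ i : Fin k, Matrix.single
        (⟨(i : ℕ), by have := i.isLt; omega⟩ : Fin (2 * (k + 1))) ⟨k, by omega⟩ (u i))
    + (∑ j : Fin k, Matrix.single (⟨k + 1, by omega⟩ : Fin (2 * (k + 1)))
        ⟨k + 2 + (j : ℕ), by have := j.isLt; omega⟩ (-σ (u j.rev)))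

/-- The pure tensor `e_0 ⊗ w ∈ 𝕎` in matrix coordinates. -/
def e0tensor {E : Type} [Field E] (n : ℕ) (w : Fin (2 * n) → E) :
    Matrix (Fin (2 * n + 1)) (Fin (2 * n)) E :=
  fun i j => if (i : ℕ) = n then w j else 0

/-- The lattice-model function `φ_{t,w}`, supported on `A + t e_0 ⊗ w` with
`φ_{t,w}(a + t e_0 ⊗ w) = ψ(−½⟨a, t e_0 ⊗ w⟩)`. -/
def phiTW (σ : E ≃+* E) (O : Subring E) (ψ : E → ℂ) (n : ℕ) (t : E) (w : Fin (2 * n) → E)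
    (u : Matrix (Fin (2 * n + 1)) (Fin (2 * n)) E) : ℂ :=
  if (∀ i j, (u - t • e0tensor n w) i j ∈ O) then
    ψ (-sympForm σ n (u - t • e0tensor n w) (t • e0tensor n w) / 2)
  else 0

/-- `K_0^W = U_{2n} ∩ GL_{2n}(𝔬_E)`. -/
def K0Set (σ : E ≃+* E) (O : Subring E) (n : ℕ) :
    Set (Matrix (Fin (2 * n)) (Fin (2 * n)) E) :=
  {g | g ∈ USet σ n ∧ ∀ i j, g i j ∈ O}

/-- `Y ⊆ E^{2n}`: the span of the first `n` coordinates. -/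
def YSet (E : Type) [Field E] (n : ℕ) : Set (Fin (2 * n) → E) :=
  {v | ∀ i : Fin (2 * n), n ≤ (i : ℕ) → v i = 0}

/-- The Siegel parabolic `Q_{2n} = {g ∈ U_{2n} : g Y = Y}`. -/
def QSet (σ : E ≃+* E) (n : ℕ) : Set (Matrix (Fin (2 * n)) (Fin (2 * n)) E) :=
  {g | g ∈ USet σ n ∧ (fun v => g.mulVec v) '' YSet E n = YSet E n}

/-- `K_S`: elements of `K_0^W` whose lower-left `n × n` block has entries in `𝔭_E`. -/
def KSSet (σ : E ≃+* E) (O : Subring E) (ϖ : E) (n : ℕ) :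
    Set (Matrix (Fin (2 * n)) (Fin (2 * n)) E) :=
  {g | g ∈ K0Set σ O n ∧
    ∀ i j : Fin (2 * n), n ≤ (i : ℕ) → (j : ℕ) < n → g i j ∈ Ppow O ϖ 1}

/-- `K_M`: elements of `K_0^W` with blocks `(2,1)`, `(3,1)`, `(3,2)` (block sizes
`(1, 2n-2, 1)`) having entries in `𝔭_E`. -/
def KMSet (σ : E ≃+* E) (O : Subring E) (ϖ : E) (n : ℕ) :
    Set (Matrix (Fin (2 * n)) (Fin (2 * n)) E) :=
  {g | g ∈ K0Set σ O n ∧ ∀ i j : Fin (2 * n),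
      ((0 < (i : ℕ) ∧ (j : ℕ) = 0) ∨ ((i : ℕ) = 2 * n - 1 ∧ (j : ℕ) < 2 * n - 1)) →
      g i j ∈ Ppow O ϖ 1}

/-- The Schwartz space `𝒮(E^k)` of locally constant compactly supported functions, as a
`ℂ`-submodule of all functions. -/
def SMod (E : Type) [Field E] [TopologicalSpace E] (k : ℕ) :
    Submodule ℂ ((Fin k → E) → ℂ) where
  carrier := {f | (∀ ξ, ∃ U ∈ nhds ξ, ∀ η ∈ U, f η = f ξ) ∧
                  ∃ C : Set (Fin k → E), IsCompact C ∧ ∀ ξ ∉ C, f ξ = 0}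
  add_mem' := by
    rintro f g ⟨hf1, Cf, hCf, hf2⟩ ⟨hg1, Cg, hCg, hg2⟩
    refine ⟨fun ξ => ?_, Cf ∪ Cg, hCf.union hCg, fun ξ hξ => ?_⟩
    · obtain ⟨U, hU, hUf⟩ := hf1 ξ
      obtain ⟨Vv, hV, hVg⟩ := hg1 ξ
      exact ⟨U ∩ Vv, Filter.inter_mem hU hV, fun η hη => by
        simp only [Pi.add_apply, hUf η hη.1, hVg η hη.2]⟩
    · simp only [Pi.add_apply, hf2 ξ (fun h => hξ (Set.mem_union_left _ h)),
        hg2 ξ (fun h => hξ (Set.mem_union_right _ h)), add_zero]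
  zero_mem' := by
    refine ⟨fun ξ => ⟨Set.univ, Filter.univ_mem, fun η _ => rfl⟩,
      ∅, isCompact_empty, fun ξ _ => rfl⟩
  smul_mem' := by
    rintro c f ⟨hf1, Cf, hCf, hf2⟩
    refine ⟨fun ξ => ?_, Cf, hCf, fun ξ hξ => ?_⟩
    · obtain ⟨U, hU, hUf⟩ := hf1 ξ
      exact ⟨U, hU, fun η hη => by simp only [Pi.smul_apply, hUf η hη]⟩
    · simp only [Pi.smul_apply, hf2 ξ hξ, smul_zero]

end Newforms

/-! The matrix `B` maps `⊕ⱼ 𝔭_E^{b j} e_j` into `⊕ᵢ 𝔭_E^{a i} e_i` iff `B i j ∈ 𝔭_E^{a i - b j}`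
for all `i, j`, as one sees by testing on the generators `ϖ^{b j} e_j`. Applied to `B = h - 1` and
the lattices `M_{2m}^* → M_{2m}`, resp. `N_{2m}^* → N_{2m}`, the exponents `a i - b j` are `0`, `m`
or `2m`, exactly as in the congruence conditions defining `K_{2m}^V`, resp. `K_{2m}^W`. -/

namespace Newforms

variable {E : Type} [Field E] {O : Subring E} {ϖ : E}

lemma mem_Ppow_iff (hϖ0 : ϖ ≠ 0) {m : ℤ} {x : E} : x ∈ Ppow O ϖ m ↔ ϖ ^ (-m) * x ∈ O := by
  constructor
  · rintro ⟨y, hy, rfl⟩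
    rwa [← mul_assoc, ← zpow_add₀ hϖ0, neg_add_cancel, zpow_zero, one_mul]
  · intro hx
    refine ⟨ϖ ^ (-m) * x, hx, ?_⟩
    rw [← mul_assoc, ← zpow_add₀ hϖ0, add_neg_cancel, zpow_zero, one_mul]

lemma zpow_mem_Ppow (m : ℤ) : ϖ ^ m ∈ Ppow O ϖ m := ⟨1, O.one_mem, (mul_one _).symm⟩

lemma mul_mem_Ppow (hϖ0 : ϖ ≠ 0) {a b : ℤ} {x y : E}
    (hx : x ∈ Ppow O ϖ a) (hy : y ∈ Ppow O ϖ b) : x * y ∈ Ppow O ϖ (a + b) := by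
  obtain ⟨x', hx', rfl⟩ := hx
  obtain ⟨y', hy', rfl⟩ := hy
  exact ⟨x' * y', O.mul_mem hx' hy', by rw [zpow_add₀ hϖ0]; ring⟩

lemma sum_mem_Ppow (hϖ0 : ϖ ≠ 0) {m : ℤ} {ι : Type*} {s : Finset ι} {f : ι → E}
    (h : ∀ i ∈ s, f i ∈ Ppow O ϖ m) : ∑ i ∈ s, f i ∈ Ppow O ϖ m := by
  rw [mem_Ppow_iff hϖ0, Finset.mul_sum]
  exact O.sum_mem fun i hi => (mem_Ppow_iff hϖ0).mp (h i hi)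

lemma mem_Ppow_zero {x : E} : x ∈ Ppow O ϖ 0 ↔ x ∈ O := by
  simp [Ppow]

lemma mem_of_mem_Ppow (hϖO : ϖ ∈ O) {c : ℤ} (hc : 0 ≤ c) {x : E}
    (hx : x ∈ Ppow O ϖ c) : x ∈ O := by
  lift c to ℕ using hc
  obtain ⟨y, hy, rfl⟩ := hx
  rw [zpow_natCast]
  exact O.mul_mem (O.pow_mem hϖO c) hy

lemma sub_one_mem_iff {x : E} : x - 1 ∈ O ↔ x ∈ O := by
  rw [sub_eq_add_neg]
  exact add_mem_cancel_right (neg_mem O.one_mem)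

lemma mem_of_sub_one_mem_Ppow (hϖO : ϖ ∈ O) {c : ℤ} (hc : 0 ≤ c) {x : E}
    (hx : x - 1 ∈ Ppow O ϖ c) : x ∈ O :=
  sub_one_mem_iff.mp (mem_of_mem_Ppow hϖO hc hx)

def PpowLattice {ι : Type*} (O : Subring E) (ϖ : E) (a : ι → ℤ) : Set (ι → E) :=
  {u | ∀ i, u i ∈ Ppow O ϖ (a i)}

theorem mulVec_mem_PpowLattice_iff (hϖ0 : ϖ ≠ 0) {ι κ : Type*} [Fintype κ] [DecidableEq κ]
    (a : ι → ℤ) (b : κ → ℤ) (B : Matrix ι κ E) :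
    (∀ u ∈ PpowLattice O ϖ b, B *ᵥ u ∈ PpowLattice O ϖ a) ↔
      ∀ i j, B i j ∈ Ppow O ϖ (a i - b j) := by
  constructor
  · intro H i j
    have hbasis : Pi.single j (ϖ ^ b j) ∈ PpowLattice O ϖ b := fun l => by
      rcases eq_or_ne l j with rfl | hl
      · simpa using zpow_mem_Ppow (b l)
      · simpa [hl] using ⟨0, O.zero_mem, (mul_zero _).symm⟩
    have himage : B i j * ϖ ^ b j ∈ Ppow O ϖ (a i) := by
      simpa [Matrix.mulVec, dotProduct_single] using H _ hbasis i
    have hB : B i j = B i j * ϖ ^ b j * ϖ ^ (-b j) := by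
      rw [mul_assoc, ← zpow_add₀ hϖ0, add_neg_cancel, zpow_zero, mul_one]
    rw [hB, sub_eq_add_neg]
    exact mul_mem_Ppow hϖ0 himage (zpow_mem_Ppow _)
  · intro H u hu i
    refine sum_mem_Ppow hϖ0 fun j _ => ?_
    simpa using mul_mem_Ppow hϖ0 (H i j) (hu j)

theorem forall_mulVec_sub_mem_PpowLattice_iff (hϖ0 : ϖ ≠ 0) {ι : Type*} [Fintype ι]
    [DecidableEq ι] (a b : ι → ℤ) (A : Matrix ι ι E) :
    (∀ u ∈ PpowLattice O ϖ b, A *ᵥ u - u ∈ PpowLattice O ϖ a) ↔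
      ∀ i j, (A - 1) i j ∈ Ppow O ϖ (a i - b j) := by
  simp only [← mulVec_mem_PpowLattice_iff hϖ0, Matrix.sub_mulVec, Matrix.one_mulVec]

lemma setOf_mem_Ppow_at_eq_PpowLattice {k : ℕ} (p : ℕ) (μ : ℤ) :
    {u : Fin k → E | (∀ i : Fin k, (i : ℕ) ≠ p → u i ∈ O) ∧
      ∀ i : Fin k, (i : ℕ) = p → u i ∈ Ppow O ϖ μ} =
    PpowLattice O ϖ (fun i : Fin k => if (i : ℕ) = p then μ else 0) := by
  ext u
  simp only [Set.mem_ofPred_eq, PpowLattice, ← forall_and]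
  refine forall_congr' fun i => ?_
  by_cases hi : (i : ℕ) = p <;> simp [hi, mem_Ppow_zero]

lemma MVlat_eq (n : ℕ) (μ : ℤ) :
    MVlat O ϖ n μ = PpowLattice O ϖ (fun i : Fin (2 * n + 1) => if (i : ℕ) = n then μ else 0) :=
  setOf_mem_Ppow_at_eq_PpowLattice n μ

lemma NWlat_eq (n : ℕ) (μ : ℤ) :
    NWlat O ϖ n μ = PpowLattice O ϖ (fun i : Fin (2 * n) => if (i : ℕ) = 2 * n - 1 then μ else 0) :=
  setOf_mem_Ppow_at_eq_PpowLattice (2 * n - 1) μ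

lemma NWdual_eq (n : ℕ) (μ : ℤ) :
    NWdual O ϖ n μ = PpowLattice O ϖ (fun i : Fin (2 * n) => if (i : ℕ) = 0 then μ else 0) :=
  setOf_mem_Ppow_at_eq_PpowLattice 0 μ

lemma mem_KVshape_iff (hϖO : ϖ ∈ O) {n m : ℕ} (h : Matrix (Fin (2 * n + 1)) (Fin (2 * n + 1)) E) :
    h ∈ KVshape O ϖ n m ↔ ∀ i j : Fin (2 * n + 1), (h - 1) i j ∈ Ppow O ϖ
      ((if (i : ℕ) = n then (m : ℤ) else 0) - (if (j : ℕ) = n then -(m : ℤ) else 0)) := by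
  simp only [KVshape, Set.mem_ofPred_eq, ← forall_and]
  refine forall_congr' fun i => forall_congr' fun j => ?_
  rw [Matrix.sub_apply, Matrix.one_apply]
  by_cases hi : (i : ℕ) = n <;> by_cases hj : (j : ℕ) = n
  · obtain rfl : i = j := Fin.ext (hi.trans hj.symm)
    simpa [hi, two_mul] using mem_of_sub_one_mem_Ppow hϖO (by positivity)
  · have hij : i ≠ j := fun h => hj (h ▸ hi)
    simpa [hij, hi, hj] using mem_of_mem_Ppow hϖO (Nat.cast_nonneg m)
  · have hij : i ≠ j := fun h => hi (h ▸ hj)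
    simpa [hij, hi, hj] using mem_of_mem_Ppow hϖO (Nat.cast_nonneg m)
  · split_ifs <;> simp [hi, hj, mem_Ppow_zero, sub_one_mem_iff]

lemma mem_KWshape_iff (hϖO : ϖ ∈ O) {n m : ℕ} (g : Matrix (Fin (2 * n)) (Fin (2 * n)) E) :
    g ∈ KWshape O ϖ n m ↔ ∀ i j : Fin (2 * n), (g - 1) i j ∈ Ppow O ϖ
      ((if (i : ℕ) = 2 * n - 1 then (m : ℤ) else 0) - (if (j : ℕ) = 0 then -(m : ℤ) else 0)) := by
  simp only [KWshape, Set.mem_ofPred_eq, ← forall_and]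
  refine forall_congr' fun i => forall_congr' fun j => ?_
  have hi2n := i.isLt
  have hj2n := j.isLt
  have hn : 2 * n - 1 ≠ 0 := by omega
  rw [Matrix.sub_apply, Matrix.one_apply]
  by_cases hi : (i : ℕ) = 2 * n - 1 <;> by_cases hj : (j : ℕ) = 0
  · have hij : i ≠ j := fun h => hn (hi ▸ h ▸ hj)
    simpa [hij, hi, hj, hn, hn.symm, ← two_mul] using mem_of_mem_Ppow hϖO (by positivity)
  · rcases eq_or_ne i j with rfl | hij
    · simpa [hi, hn] using mem_of_sub_one_mem_Ppow hϖO (Nat.cast_nonneg m)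
    · have hji : (j : ℕ) ≠ i := fun h => hij (Fin.ext h.symm)
      have hj' : (j : ℕ) < 2 * n - 1 := by omega
      simpa [hij, hi, hj, Nat.pos_of_ne_zero hj, hj', hj'.ne] using
        mem_of_mem_Ppow hϖO (Nat.cast_nonneg m)
  · rcases eq_or_ne i j with rfl | hij
    · simpa [hj, hn.symm] using mem_of_sub_one_mem_Ppow hϖO (Nat.cast_nonneg m)
    · have hi0 : (i : ℕ) ≠ 0 := fun h => hij (Fin.ext (h.trans hj.symm))
      have hi' : (i : ℕ) < 2 * n - 1 := by omega
      simpa [hij, hi, hj, hi0, Nat.pos_of_ne_zero hi0, hi'] using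
        mem_of_mem_Ppow hϖO (Nat.cast_nonneg m)
  · split_ifs <;> simp [hi, hj, mem_Ppow_zero, sub_one_mem_iff]

theorem statement8_general (E : Type) [Field E]
    (σ : E ≃+* E)
    (O : Subring E)
    (ϖ : E) (hϖO : ϖ ∈ O) (hϖ0 : ϖ ≠ 0)
    (n m : ℕ) :
    KV σ O ϖ n m =
      {h | h ∈ UOddSet σ n ∧
        ∀ u ∈ MVlat O ϖ n (-(m : ℤ)), h.mulVec u - u ∈ MVlat O ϖ n (m : ℤ)} ∧
    KW σ O ϖ n m =
      {g | g ∈ USet σ n ∧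
        ∀ u ∈ NWdual O ϖ n (-(m : ℤ)), g.mulVec u - u ∈ NWlat O ϖ n (m : ℤ)} := by
  constructor
  · ext h
    rw [KV, Set.mem_inter_iff, Set.mem_ofPred_eq, MVlat_eq, MVlat_eq,
      forall_mulVec_sub_mem_PpowLattice_iff hϖ0, mem_KVshape_iff hϖO, and_comm]
  · ext g
    rw [KW, Set.mem_inter_iff, Set.mem_ofPred_eq, NWdual_eq, NWlat_eq,
      forall_mulVec_sub_mem_PpowLattice_iff hϖ0, mem_KWshape_iff hϖO, and_comm]

/-- For `n ≥ 1` and even `2m > 0`, with the lattices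
`M_{2m}, M_{2m}^* ⊆ V` and `N_{2m}, N_{2m}^* ⊆ W`:
`K_{2m}^V = {h ∈ U(V) : (h−1)·M_{2m}^* ⊆ M_{2m}}` and
`K_{2m}^W = {g ∈ U(W) : (g−1)·N_{2m}^* ⊆ N_{2m}}`. -/
theorem statement8 (E : Type) [Field E] [CharZero E]
    (σ : E ≃+* E) (hσinv : ∀ x, σ (σ x) = x) (hσne : σ ≠ RingEquiv.refl E)
    (O : Subring E) (hval : ∀ x : E, x ∈ O ∨ x⁻¹ ∈ O) (hσO : ∀ x ∈ O, σ x ∈ O)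
    (ϖ : E) (hϖO : ϖ ∈ O) (hϖ0 : ϖ ≠ 0) (hϖnu : ϖ⁻¹ ∉ O)
    (hϖgen : ∀ x ∈ O, x⁻¹ ∉ O → x ∈ Ppow O ϖ 1) (hϖF : σ ϖ = ϖ)
    (hodd : (2 : E)⁻¹ ∈ O)
    (n m : ℕ) (hn : 1 ≤ n) (hm : 1 ≤ m) :
    KV σ O ϖ n m =
      {h | h ∈ UOddSet σ n ∧
        ∀ u ∈ MVlat O ϖ n (-(m : ℤ)), h.mulVec u - u ∈ MVlat O ϖ n (m : ℤ)} ∧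
    KW σ O ϖ n m =
      {g | g ∈ USet σ n ∧
        ∀ u ∈ NWdual O ϖ n (-(m : ℤ)), g.mulVec u - u ∈ NWlat O ϖ n (m : ℤ)} :=
  statement8_general E σ O ϖ hϖO hϖ0 n m

end Newforms
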